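/- The no-tottering tree-pattern kernel K^{NT}(G_1,G_2) = Σ_{t∈T} w(t) ψ_t^{NT}(G_1) ψ_t^{NT}(G_2) satisfies K^{NT}(G_1,G_2) = Σ_{t∈T} w(t) ψ_t^{{V_{G_1}}}(G'_1) ψ_t^{{V_{G_2}}}(G'_2), where G'_i is the transformed graph of G_i and ψ_t^{{V_G}}(G') = Σ_{v∈V_G} ψ_t^{(v)}(G'). -/

import Mathlib

open scoped Classical

/-- A finite labeled directed graph: vertices `V`, edge relation `E`, vertex
labels `lv` and edge labels `le`, all labels taken in the alphabet `A`. -/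
structure LGraph (A : Type) where
  V : Type
  [fintypeV : Fintype V]
  [decEqV : DecidableEq V]
  E : V → V → Prop
  [decE : DecidableRel E]
  lv : V → A
  le : V → V → A

attribute [instance] LGraph.fintypeV LGraph.decEqV LGraph.decE

/-- A labeled rooted tree: a root label together with the list of children,
each child carrying the label of the edge connecting it to its parent and
the corresponding labeled subtree. -/
inductive LTree (A : Type) : Type where
  | node : A → List (A × LTree A) → LTree A

namespace LTree

variable {A : Type}

-- `size t` : number of nodes
mutual
def size : LTree A → ℕ
  | .node _ cs => 1 + sizeList cs
def sizeList : List (A × LTree A) → ℕ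
  | [] => 0
  | (_, t) :: rest => size t + sizeList rest
end

-- `depth t` : maximal number of edges from the root to a node, plus one
mutual
def depth : LTree A → ℕ
  | .node _ cs => 1 + depthList cs
def depthList : List (A × LTree A) → ℕ
  | [] => 0
  | (_, t) :: rest => max (depth t) (depthList rest)
end

-- `leaves t` : number of leaf nodes
mutual
def leaves : LTree A → ℕ
  | .node _ [] => 1
  | .node _ (c :: cs) => leavesList (c :: cs)
def leavesList : List (A × LTree A) → ℕ
  | [] => 0
  | (_, t) :: rest => leaves t + leavesList rest
end

/-- branching cardinality: number of leaves minus one -/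
def branch (t : LTree A) : ℕ := t.leaves - 1

-- `balanced t h` : `t` is perfectly depth-balanced of order `h` (every leaf at depth `h`)
mutual
def balanced : LTree A → ℕ → Prop
  | .node _ [], h => h = 1
  | .node _ (c :: cs), h => balancedList (c :: cs) (h - 1) ∧ 2 ≤ h
def balancedList : List (A × LTree A) → ℕ → Prop
  | [], _ => True
  | (_, t) :: rest, h => balanced t h ∧ balancedList rest h
end

end LTree

/-- A tree of graph vertices: the candidate images of the nodes of a tree
under a tree-pattern. -/
inductive VTree (V : Type) : Type where
  | node : V → List (VTree V) → VTree V

namespace VTree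

variable {V : Type}

/-- the vertex at the root -/
def root : VTree V → V
  | .node u _ => u

/-- the list of subtrees at the root -/
def children : VTree V → List (VTree V)
  | .node _ ps => ps

end VTree

/-- `isPattern G t p` : the decoration `p` of the tree `t` by vertices of `G` is a
tree-pattern of `G` with respect to `t`: node labels match, every tree edge is
realized by an edge of `G` with matching label, and sibling nodes are mapped to
distinct vertices. -/
def isPattern {A : Type} (G : LGraph A) : LTree A → VTree G.V → Prop
  | .node a cs, .node u ps =>
    G.lv u = a ∧ ps.length = cs.length ∧
    (∀ i j : Fin ps.length, i ≠ j → (ps.get i).root ≠ (ps.get j).root) ∧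
    ∀ i : Fin ps.length, ∀ (h : (i : ℕ) < cs.length),
      G.E u (ps.get i).root ∧ G.le u (ps.get i).root = (cs.get ⟨i, h⟩).1 ∧
      isPattern G (cs.get ⟨i, h⟩).2 (ps.get i)
termination_by _ p => sizeOf p
decreasing_by
  have h1 : sizeOf (ps.get i) < sizeOf ps := List.sizeOf_lt_of_mem (ps.get_mem i)
  simp only [VTree.node.sizeOf_spec]
  omega

/-- `psiRoot G t u` : number of tree-patterns of `G` with respect to `t` rooted at `u`. -/
noncomputable def psiRoot {A : Type} (G : LGraph A) (t : LTree A) (u : G.V) : ℕ :=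
  Set.ncard {p : VTree G.V | isPattern G t p ∧ p.root = u}

/-- `psi G t` : number of tree-patterns of `G` with respect to `t`. -/
noncomputable def psi {A : Type} (G : LGraph A) (t : LTree A) : ℕ :=
  Set.ncard {p : VTree G.V | isPattern G t p}

/-- The transformed graph `G'` of `G`: its vertices are the vertices and the edges
of `G`; there is an edge from `v` to `(v,t)` for every edge `(v,t)` of `G`, and an
edge from `(u,v)` to `(v,t)` for every pair of consecutive edges of `G` with `u ≠ t`.
A vertex `(u,v)` is labeled by `l(v)` and any edge pointing to `(v,t)` by `l((v,t))`. -/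
noncomputable def transform {A : Type} (G : LGraph A) : LGraph A where
  V := G.V ⊕ {p : G.V × G.V // G.E p.1 p.2}
  fintypeV :=
    have : Finite {p : G.V × G.V // G.E p.1 p.2} := Subtype.finite
    have : Fintype {p : G.V × G.V // G.E p.1 p.2} := Fintype.ofFinite _
    inferInstance
  decEqV := Classical.decEq _
  E := fun x y =>
    match x, y with
    | Sum.inl v, Sum.inr e => e.1.1 = v
    | Sum.inr e, Sum.inr e' => e'.1.1 = e.1.2 ∧ e.1.1 ≠ e'.1.2
    | _, _ => False
  decE := Classical.decRel _
  lv := fun x =>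
    match x with
    | Sum.inl v => G.lv v
    | Sum.inr e => G.lv e.1.2
  le := fun _ y =>
    match y with
    | Sum.inl v => G.lv v
    | Sum.inr e => G.le e.1.1 e.1.2

namespace VTree

variable {V : Type}

-- `noTot p` : the decorated tree (tree-pattern) `p` is no-tottering: no vertex
-- appears simultaneously as the parent and a child of a second vertex, i.e. for
-- every node, the vertex at this node differs from the vertices at its grandchildren
-- along each branch.
mutual
def noTot : VTree V → Prop
  | .node u ps => (∀ p ∈ ps, ∀ q ∈ p.children, u ≠ q.root) ∧ noTotList ps
def noTotList : List (VTree V) → Prop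
  | [] => True
  | p :: rest => noTot p ∧ noTotList rest
end

-- `rootLeafWalks p` : the list of vertex sequences of `p` along the paths from the
-- root to the leaves.
mutual
def rootLeafWalks : VTree V → List (List V)
  | .node u [] => [[u]]
  | .node u (p :: ps) => (rootLeafWalksList (p :: ps)).map (u :: ·)
def rootLeafWalksList : List (VTree V) → List (List V)
  | [] => []
  | p :: rest => rootLeafWalks p ++ rootLeafWalksList rest
end

end VTree

/-- a list of vertices is a walk of `G` -/
def isWalkList {A : Type} (G : LGraph A) (l : List G.V) : Prop :=
  ∀ i, (h : i + 1 < l.length) → G.E (l.get ⟨i, by omega⟩) (l.get ⟨i + 1, h⟩)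

/-- a list of vertices is no-tottering: entries two steps apart are distinct -/
def noTotList' {V : Type} (l : List V) : Prop :=
  ∀ i, (h : i + 2 < l.length) → l.get ⟨i, by omega⟩ ≠ l.get ⟨i + 2, h⟩

/-- `psiNT G t` : number of no-tottering tree-patterns of `G` with respect to `t`. -/
noncomputable def psiNT {A : Type} (G : LGraph A) (t : LTree A) : ℕ :=
  Set.ncard {p : VTree G.V | isPattern G t p ∧ p.noTot}

/-!
Below its root, a tree-pattern of `G'` rooted at a vertex `v` of `G` runs through edge-vertices
`(u, w)`, and `G'` has an edge `(u, w) → (w, z)` only if `z ≠ u`. Projecting every vertex of `G'`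
to its head in `G` therefore yields a no-tottering tree-pattern of `G` rooted at `v`. Conversely,
a no-tottering tree-pattern of `G` lifts to `G'` by sending every non-root node to the edge that
joins it to its parent. The two maps are mutually inverse, so summing over the root `v` gives
`ψ_t^{NT}(G) = ψ_t^{V_G}(G')`, term by term in the kernel.
-/

theorem List.finite_setOf_forall₂ {α β : Type*} {R : α → β → Prop} :
    ∀ {l : List β}, (∀ b ∈ l, {a | R a b}.Finite) → {u | List.Forall₂ R u l}.Finite
  | [], _ => by simp
  | b :: l, h => by
    refine ((h b (by simp)).image2 List.cons (List.finite_setOf_forall₂ fun b hb =>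
      h b (List.mem_cons_of_mem _ hb))).subset ?_
    intro u hu
    obtain ⟨a, u, hab, hul, rfl⟩ := List.forall₂_cons_right_iff.1 hu
    exact Set.mem_image2_of_mem hab hul

theorem List.Forall₂.exists_of_mem_left {α β : Type*} {R : α → β → Prop} {l₁ : List α}
    {l₂ : List β} (h : List.Forall₂ R l₁ l₂) {a : α} (ha : a ∈ l₁) :
    ∃ b ∈ l₂, R a b := by
  induction h with
  | nil => simp at ha
  | cons hab _ ih =>
    rcases List.mem_cons.1 ha with rfl | ha
    · exact ⟨_, List.mem_cons_self, hab⟩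
    · obtain ⟨b, hb, h⟩ := ih ha
      exact ⟨b, List.mem_cons_of_mem _ hb, h⟩

namespace VTree

variable {V W : Type}

@[elab_as_elim]
theorem mem_induction {motive : VTree V → Prop}
    (node : ∀ u ps, (∀ p ∈ ps, motive p) → motive (.node u ps)) : ∀ p, motive p
  | .node u ps => node u ps fun p _ => mem_induction node p

def map (f : V → W) : VTree V → VTree W
  | .node u ps => .node (f u) (ps.map (map f))

@[simp] theorem map_node (f : V → W) (u : V) (ps : List (VTree V)) :
    map f (.node u ps) = .node (f u) (ps.map (map f)) := by
  rw [map]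

@[simp] theorem root_node (u : V) (ps : List (VTree V)) : (node u ps).root = u := rfl

@[simp] theorem children_node (u : V) (ps : List (VTree V)) : (node u ps).children = ps := rfl

@[simp] theorem root_map (f : V → W) (p : VTree V) : (p.map f).root = f p.root := by
  cases p; simp

@[simp] theorem children_map (f : V → W) (p : VTree V) :
    (p.map f).children = p.children.map (map f) := by
  cases p; simp

theorem noTotList_iff_forall : ∀ ps : List (VTree V), noTotList ps ↔ ∀ p ∈ ps, p.noTot
  | [] => by simp [noTotList]
  | p :: ps => by simp [noTotList, noTotList_iff_forall ps]

theorem noTot_node_iff (u : V) (ps : List (VTree V)) :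
    (node u ps).noTot ↔
      (∀ p ∈ ps, ∀ q ∈ p.children, u ≠ q.root) ∧ ∀ p ∈ ps, p.noTot := by
  rw [noTot, noTotList_iff_forall]

end VTree

namespace LTree

@[elab_as_elim]
theorem mem_induction {A : Type} {motive : LTree A → Prop}
    (node : ∀ a cs, (∀ c ∈ cs, motive c.2) → motive (.node a cs)) : ∀ t, motive t
  | .node a cs => node a cs fun c hc =>
    have := List.sizeOf_lt_of_mem hc
    mem_induction node c.2
decreasing_by
  cases c; simp_all only [LTree.node.sizeOf_spec, Prod.mk.sizeOf_spec]; omega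

end LTree

section Pattern

variable {A : Type} (G : LGraph A)

theorem isPattern_node_iff (a : A) (cs : List (A × LTree A)) (u : G.V)
    (ps : List (VTree G.V)) :
    isPattern G (.node a cs) (.node u ps) ↔
      G.lv u = a ∧ (ps.map VTree.root).Nodup ∧
        List.Forall₂ (fun p c => G.E u p.root ∧ G.le u p.root = c.1 ∧ isPattern G c.2 p)
          ps cs := by
  have hroots : ps.map VTree.root = List.ofFn fun i => (ps.get i).root := by
    conv_lhs => rw [← List.ofFn_get ps, List.map_ofFn]
    rfl
  rw [isPattern, List.forall₂_iff_get, hroots, List.nodup_ofFn]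
  constructor
  · rintro ⟨hlv, hlen, hnd, hE⟩
    exact ⟨hlv, fun i j => not_imp_not.1 (hnd i j), hlen,
      fun i h₁ h₂ => hE ⟨i, h₁⟩ h₂⟩
  · rintro ⟨hlv, hnd, hlen, hE⟩
    exact ⟨hlv, hlen, fun i j => mt (@hnd i j), fun i h => hE i i.2 h⟩

theorem isPattern_finite (t : LTree A) :
    {p : VTree G.V | isPattern G t p}.Finite := by
  induction t using LTree.mem_induction with
  | node a cs ih =>
  have hchildren := List.finite_setOf_forall₂
    (R := fun (p : VTree G.V) (c : A × LTree A) => isPattern G c.2 p) ih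
  refine ((Set.finite_univ (α := G.V)).image2 VTree.node hchildren).subset ?_
  rintro ⟨u, ps⟩ hp
  rw [Set.mem_ofPred_eq, isPattern_node_iff] at hp
  exact Set.mem_image2_of_mem (Set.mem_univ u) (hp.2.2.imp fun _ _ h => h.2.2)

end Pattern

namespace LGraph

variable {A : Type} {G : LGraph A}

def head : (transform G).V → G.V
  | .inl v => v
  | .inr e => e.1.2

def tail? : (transform G).V → Option G.V
  | .inl _ => none
  | .inr e => some e.1.1

-- Off the edges of `G` the value is junk, chosen so that `head (edgeVertex u v) = v` always holds.
noncomputable def edgeVertex (u v : G.V) : (transform G).V :=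
  if h : G.E u v then .inr ⟨(u, v), h⟩ else .inl v

theorem edgeVertex_of_adj {u v : G.V} (h : G.E u v) : edgeVertex u v = .inr ⟨(u, v), h⟩ :=
  dif_pos h

theorem edgeVertex_of_not_adj {u v : G.V} (h : ¬G.E u v) : edgeVertex u v = .inl v :=
  dif_neg h

@[simp] theorem head_edgeVertex (u v : G.V) : head (edgeVertex u v) = v := by
  by_cases h : G.E u v
  · rw [edgeVertex_of_adj h]; rfl
  · rw [edgeVertex_of_not_adj h]; rfl

theorem tail?_edgeVertex {u v : G.V} (h : G.E u v) : tail? (edgeVertex u v) = some u := by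
  rw [edgeVertex_of_adj h]; rfl

theorem transform_lv (x : (transform G).V) : (transform G).lv x = G.lv (head x) := by
  cases x <;> rfl

theorem transform_le_edgeVertex (x : (transform G).V) {u v : G.V} (h : G.E u v) :
    (transform G).le x (edgeVertex u v) = G.le u v := by
  rw [edgeVertex_of_adj h]; rfl

theorem transform_E_iff {x y : (transform G).V} :
    (transform G).E x y ↔
      G.E (head x) (head y) ∧ y = edgeVertex (head x) (head y) ∧ tail? x ≠ some (head y) := by
  rcases x with v | ⟨⟨u, v⟩, huv⟩ <;> rcases y with w | ⟨⟨w, z⟩, hwz⟩ <;>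
    simp only [transform, head, tail?, edgeVertex] <;> split_ifs <;> aesop

noncomputable def liftTree (x : (transform G).V) : VTree G.V → VTree (transform G).V
  | .node u ps => .node x (ps.map fun p => liftTree (edgeVertex u p.root) p)

@[simp] theorem liftTree_node (x : (transform G).V) (u : G.V) (ps : List (VTree G.V)) :
    liftTree x (.node u ps) = .node x (ps.map fun p => liftTree (edgeVertex u p.root) p) := by
  rw [liftTree]

@[simp] theorem root_liftTree (x : (transform G).V) (p : VTree G.V) :
    (liftTree x p).root = x := by
  cases p; simp

theorem map_head_liftTree {x : (transform G).V} {p : VTree G.V} (hx : head x = p.root) :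
    (liftTree x p).map head = p := by
  induction p using VTree.mem_induction generalizing x with
  | node u ps ih =>
  simp only [liftTree_node, VTree.map_node, List.map_map]
  rw [hx]
  congr
  conv_rhs => rw [← List.map_id ps]
  exact List.map_congr_left fun q hq => ih q hq (head_edgeVertex _ _)

theorem isPattern_liftTree {t : LTree A} {p : VTree G.V} {x : (transform G).V}
    (hx : head x = p.root) (hp : isPattern G t p) (hnt : p.noTot)
    (hback : ∀ q ∈ p.children, tail? x ≠ some q.root) :
    isPattern (transform G) t (liftTree x p) := by
  induction p using VTree.mem_induction generalizing t x with
  | node u ps ih =>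
  obtain ⟨a, cs⟩ := t
  rw [VTree.root_node] at hx
  rw [VTree.noTot_node_iff] at hnt
  rw [isPattern_node_iff] at hp
  obtain ⟨hlv, hnodup, hchildren⟩ := hp
  rw [liftTree_node, isPattern_node_iff, List.forall₂_map_left_iff]
  refine ⟨by rw [transform_lv, hx, hlv], ?_, ?_⟩
  · have hinj : Function.Injective (edgeVertex (G := G) u) :=
      Function.LeftInverse.injective (g := head) (head_edgeVertex u)
    simpa only [List.map_map, Function.comp_def, root_liftTree] using
      (hnodup.map hinj : ((ps.map VTree.root).map (edgeVertex u)).Nodup)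
  · refine (((List.forall₂_and_left _ _).2 ⟨fun q hq => hq, hchildren⟩).imp ?_)
    rintro q c ⟨hq, hE, hle, hpat⟩
    refine ⟨?_, ?_, ?_⟩
    · rw [root_liftTree, transform_E_iff, head_edgeVertex, hx]
      exact ⟨hE, rfl, hback q hq⟩
    · rw [root_liftTree, transform_le_edgeVertex _ hE]
      exact hle
    · refine ih q hq (head_edgeVertex _ _) hpat (hnt.2 q hq) fun r hr => ?_
      rw [tail?_edgeVertex hE, Ne, Option.some_inj]
      exact hnt.1 q hq r hr

theorem tail?_of_transform_E {x y : (transform G).V} (h : (transform G).E x y) :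
    tail? y = some (head x) := by
  obtain ⟨hE, hy, -⟩ := transform_E_iff.1 h
  rw [hy, tail?_edgeVertex hE]

theorem liftTree_root_map_head {t : LTree A} {p : VTree (transform G).V}
    (hp : isPattern (transform G) t p) : liftTree p.root (p.map head) = p := by
  induction p using VTree.mem_induction generalizing t with
  | node x ps ih =>
  obtain ⟨a, cs⟩ := t
  rw [isPattern_node_iff] at hp
  simp only [VTree.map_node, liftTree_node, VTree.root_node, List.map_map]
  congr
  conv_rhs => rw [← List.map_id ps]
  refine List.map_congr_left fun q hq => ?_
  obtain ⟨c, -, hE, -, hpat⟩ := hp.2.2.exists_of_mem_left hq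
  simp only [Function.comp_apply, VTree.root_map]
  rw [← (transform_E_iff.1 hE).2.1]
  exact ih q hq hpat

theorem isPattern_map_head {t : LTree A} {p : VTree (transform G).V}
    (hp : isPattern (transform G) t p) :
    isPattern G t (p.map head) ∧ (p.map head).noTot ∧
      ∀ q ∈ p.children, tail? p.root ≠ some (head q.root) := by
  induction p using VTree.mem_induction generalizing t with
  | node x ps ih =>
  obtain ⟨a, cs⟩ := t
  rw [isPattern_node_iff] at hp
  obtain ⟨hlv, hnodup, hchildren⟩ := hp
  have hadj : ∀ q ∈ ps, (transform G).E x q.root := fun q hq =>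
    (hchildren.exists_of_mem_left hq).elim fun _ h => h.2.1
  have hnt : ∀ q ∈ ps,
      (q.map head).noTot ∧ ∀ r ∈ q.children, tail? q.root ≠ some (head r.root) :=
    fun q hq => (hchildren.exists_of_mem_left hq).elim fun _ h => (ih q hq h.2.2.2).2
  rw [VTree.map_node, isPattern_node_iff, VTree.noTot_node_iff]
  refine ⟨⟨by rw [← transform_lv, hlv], ?_, ?_⟩, ?_,
    fun q hq => (transform_E_iff.1 (hadj q hq)).2.2⟩
  · have hcomp : VTree.root ∘ VTree.map head = head ∘ VTree.root (V := (transform G).V) :=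
      funext (VTree.root_map head)
    rw [List.map_map, hcomp, ← List.map_map]
    refine hnodup.map_on fun y hy z hz hyz => ?_
    obtain ⟨q, hq, rfl⟩ := List.mem_map.1 hy
    obtain ⟨r, hr, rfl⟩ := List.mem_map.1 hz
    rw [(transform_E_iff.1 (hadj q hq)).2.1, (transform_E_iff.1 (hadj r hr)).2.1, hyz]
  · rw [List.forall₂_map_left_iff]
    refine ((List.forall₂_and_left _ _).2 ⟨fun q hq => hq, hchildren⟩).imp ?_
    rintro q c ⟨hq, hE, hle, hpat⟩
    obtain ⟨hE', hroot, -⟩ := transform_E_iff.1 hE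
    rw [hroot, transform_le_edgeVertex _ hE'] at hle
    exact ⟨by rwa [VTree.root_map], by rwa [VTree.root_map], (ih q hq hpat).1⟩
  · simp only [List.forall_mem_map, VTree.children_map, VTree.root_map]
    refine ⟨fun q hq r hr hxr => (hnt q hq).2 r hr ?_, fun q hq => (hnt q hq).1⟩
    rw [tail?_of_transform_E (hadj q hq), hxr]

end LGraph

section Count

variable {A : Type} (G : LGraph A)

open LGraph

theorem psiRoot_transform_inl (t : LTree A) (v : G.V) :
    psiRoot (transform G) t (.inl v) =
      {p : VTree G.V | isPattern G t p ∧ p.noTot ∧ p.root = v}.ncard := by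
  have hinj : Set.InjOn (VTree.map head)
      {p : VTree (transform G).V | isPattern (transform G) t p ∧ p.root = .inl v} := by
    rintro p ⟨hp, hpv⟩ q ⟨hq, hqv⟩ hpq
    rw [← liftTree_root_map_head hp, ← liftTree_root_map_head hq, hpv, hqv, hpq]
  refine hinj.ncard_image.symm.trans (congrArg Set.ncard ?_)
  ext p
  constructor
  · rintro ⟨p', ⟨hp', hroot⟩, rfl⟩
    obtain ⟨hpat, hnt, -⟩ := isPattern_map_head hp'
    exact ⟨hpat, hnt, by rw [VTree.root_map, hroot]; rfl⟩
  · rintro ⟨hp, hnt, rfl⟩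
    refine ⟨liftTree (.inl p.root) p, ⟨?_, root_liftTree _ _⟩, map_head_liftTree rfl⟩
    exact isPattern_liftTree rfl hp hnt fun _ _ => nofun

theorem psiNT_eq_sum_psiRoot_transform (t : LTree A) :
    psiNT G t = ∑ v : G.V, psiRoot (transform G) t (.inl v) := by
  have hfin : {p : VTree G.V | isPattern G t p ∧ p.noTot}.Finite :=
    (isPattern_finite G t).subset fun _ hp => hp.1
  rw [psiNT, Set.ncard_eq_toFinset_card _ hfin,
    Finset.card_eq_sum_card_fiberwise fun p _ => Finset.mem_univ (VTree.root p)]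
  refine Finset.sum_congr rfl fun v _ => ?_
  rw [psiRoot_transform_inl, ← Set.ncard_coe_finset]
  congr 1
  ext p
  simp [and_assoc]

end Count

/-- The no-tottering tree-pattern kernel
`K^{NT}(G1,G2) = Σ_{t∈T} w(t) ψ_t^{NT}(G1) ψ_t^{NT}(G2)` can be computed on the
transformed graphs: it equals `Σ_{t∈T} w(t) ψ_t^{V_{G1}}(G'_1) ψ_t^{V_{G2}}(G'_2)`,
where `ψ_t^{V_G}(G') = Σ_{v∈V_G} ψ_t^{(v)}(G')` counts the tree-patterns of the
transformed graph rooted in the copy of `V_G`. -/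
theorem stmt_18 {A : Type} (S : Set (LTree A)) (w : LTree A → ℝ)
    (G1 G2 : LGraph A) :
    (∑ᶠ t ∈ S, w t * (psiNT G1 t : ℝ) * (psiNT G2 t : ℝ)) =
      ∑ᶠ t ∈ S, w t *
        (∑ v : G1.V, (psiRoot (transform G1) t (Sum.inl v) : ℝ)) *
        (∑ v : G2.V, (psiRoot (transform G2) t (Sum.inl v) : ℝ)) := by
  refine finsum_mem_congr rfl fun t _ => ?_
  rw [psiNT_eq_sum_psiRoot_transform G1, psiNT_eq_sum_psiRoot_transform G2, Nat.cast_sum,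
    Nat.cast_sum]
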